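/- For every integer k ≥ 4, let V be the set of variables q_{v,w}, z_{v,w} (v∈[k], w∈[k−1]) of TPHP and let H be the downward-closed family of all subsets X ⊆ V that mention at most k−1 pigeons. Then the set P of polynomial inequalities encoding the clauses of TPHP admits an H-consistent family of distributions. -/

import Mathlib

/-!
For a set `X` of variables mentioning at most `k - 1` pigeons, `Π_X` is the law of the
assignment obtained by putting the pigeons of `X` into the `k - 1` holes by a uniformly random
injection: label the pigeons of `X` injectively by `Fin (k - 1)` and compose the labelling with a
uniformly random permutation of `Fin (k - 1)`. Every such assignment satisfies each clause whose
variables lie in `X`, because the pigeons involved sit in pairwise distinct holes. For `X ⊆ Y`, the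
labellings chosen for `X` and for `Y` differ on the pigeons of `X` by a permutation of the holes,
and multiplying by it preserves the uniform measure; so `Π_X` is the marginal of `Π_Y`.
-/

namespace NarrowProofs

open MvPolynomial

/-- A clause is a finite set of literals; a literal is a variable together with a
sign (`true` = positive literal, `false` = negative literal). -/
abbrev Clause (V : Type) := Finset (V × Bool)

/-- The SA encoding (truth = 1) of a clause:
`∑_{i∈I} x_i + ∑_{j∈J} (1−x_j) − 1`. -/
noncomputable def encodeIneqSA {V : Type} [DecidableEq V] (C : Clause V) :
    MvPolynomial V ℝ :=
  (∑ l ∈ C, if l.2 then X l.1 else (1 - X l.1)) - 1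

/-- The variables of the 3-CNF pigeonhole principle `TPHP`: `q v w` and `z v w`
mention pigeon `v`. -/
inductive TVar where
  | q (v w : ℕ)
  | z (v w : ℕ)
deriving DecidableEq

/-- The pigeon mentioned by a variable of `TPHP`. -/
def TVar.pigeon : TVar → ℕ
  | .q v _ => v
  | .z v _ => v

/-- The 3-CNF pigeonhole principle formula with `k` pigeons and `k-1` holes
(1-based indices). -/
def TPHP (k : ℕ) : Set (Clause TVar) :=
  { C |
    (∃ v, 1 ≤ v ∧ v ≤ k ∧
      C = {(TVar.q v 1, true), (TVar.z v 1, true)}) ∨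
    (∃ v w, 1 ≤ v ∧ v ≤ k ∧ 1 ≤ w ∧ w ≤ k - 4 ∧
      C = {(TVar.z v w, false), (TVar.q v (w+1), true), (TVar.z v (w+1), true)}) ∨
    (∃ v, 1 ≤ v ∧ v ≤ k ∧
      C = {(TVar.z v (k-3), false), (TVar.q v (k-2), true), (TVar.q v (k-1), true)}) ∨
    (∃ v v' w, 1 ≤ v ∧ v ≤ k ∧ 1 ≤ v' ∧ v' ≤ k ∧ v ≠ v' ∧ 1 ≤ w ∧ w ≤ k - 1 ∧
      C = {(TVar.q v w, false), (TVar.q v' w, false)}) }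

/-- `H` is a downward-closed family of (finite) sets of variables. -/
def downwardClosed {V : Type} (H : Set (Finset V)) : Prop :=
  ∀ X Y : Finset V, Y ∈ H → X ⊆ Y → X ∈ H

/-- A polynomial is `H`-bounded if the variable set of each of its monomials
belongs to `H`. -/
def HBounded {V : Type} (H : Set (Finset V)) (p : MvPolynomial V ℝ) : Prop :=
  ∀ m ∈ p.support, m.support ∈ H

/-- The 0/1-valued total assignment extending `μ : {0,1}^X` by zero. -/
noncomputable def assignOf {V : Type} [DecidableEq V] (X : Finset V)
    (μ : {x // x ∈ X} → Bool) : V → ℝ :=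
  fun v => if h : v ∈ X then (if μ ⟨v, h⟩ then 1 else 0) else 0

/-- `P` admits an `H`-consistent family of distributions: probability
distributions `Π_X` on `{0,1}^X` for each `X ∈ H` such that (H1) for every
`X ∈ H` and every inequality `q ≥ 0` of `P` with all variables in `X`, every
assignment in the support of `Π_X` satisfies `q ≥ 0`, and (H2) for `X ⊆ Y`
both in `H`, `Π_X` is the marginal of `Π_Y`. -/
def HConsistent (V : Type) [DecidableEq V] (H : Set (Finset V))
    (P : Set (MvPolynomial V ℝ)) : Prop :=
  ∃ Pi : (X : Finset V) → ({x // x ∈ X} → Bool) → ℝ,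
    (∀ X, X ∈ H → (∀ μ, 0 ≤ Pi X μ) ∧ (∑ μ : {x // x ∈ X} → Bool, Pi X μ) = 1) ∧
    (∀ X, X ∈ H → ∀ q ∈ P, q.vars ⊆ X → ∀ μ, 0 < Pi X μ →
      0 ≤ MvPolynomial.eval (assignOf X μ) q) ∧
    (∀ X Y : Finset V, X ∈ H → Y ∈ H → ∀ hXY : X ⊆ Y, ∀ μ,
      Pi X μ = ∑ η : {x // x ∈ Y} → Bool,
        (if (fun v : {x // x ∈ X} => η ⟨v.1, hXY v.2⟩) = μ then Pi Y η else 0))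

/-- Validity of a variable of `TPHP`: `q v w` and `z v w` with `v ∈ [k]` and
`w ∈ [k−1]`. -/
def TVar.valid (k : ℕ) : TVar → Prop
  | .q v w => 1 ≤ v ∧ v ≤ k ∧ 1 ≤ w ∧ w ≤ k - 1
  | .z v w => 1 ≤ v ∧ v ≤ k ∧ 1 ≤ w ∧ w ≤ k - 1

open Finset

section UniformPushforward

variable {Ω β : Type} [Fintype Ω] [DecidableEq β]

noncomputable def uniformPushforward (f : Ω → β) (b : β) : ℝ :=
  (#{ω | f ω = b} : ℝ) / Fintype.card Ω

lemma uniformPushforward_nonneg (f : Ω → β) (b : β) : 0 ≤ uniformPushforward f b := by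
  unfold uniformPushforward
  positivity

lemma sum_uniformPushforward [Fintype β] [Nonempty Ω] (f : Ω → β) :
    ∑ b, uniformPushforward f b = 1 := by
  have hcard : ∑ b, #{ω | f ω = b} = Fintype.card Ω :=
    (card_eq_sum_card_fiberwise fun ω _ => mem_univ (f ω)).symm
  simp only [uniformPushforward, ← sum_div]
  rw [← Nat.cast_sum, hcard, div_self (by positivity)]

lemma exists_eq_of_uniformPushforward_pos {f : Ω → β} {b : β}
    (h : 0 < uniformPushforward f b) : ∃ ω, f ω = b := by
  by_contra! hb
  simp [uniformPushforward, filter_false_of_mem fun ω _ => hb ω] at h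

lemma uniformPushforward_comp_equiv (f : Ω → β) (τ : Ω ≃ Ω) :
    uniformPushforward (f ∘ τ) = uniformPushforward f := by
  funext b
  unfold uniformPushforward
  congr 2
  exact card_equiv τ (by simp)

lemma card_filter_comp_eq_sum {γ : Type} [Fintype β] [DecidableEq γ] (f : Ω → β) (g : β → γ)
    (c : γ) :
    #{ω | g (f ω) = c} = ∑ b, if g b = c then #{ω | f ω = b} else 0 := by
  rw [← sum_filter, card_eq_sum_card_fiberwise (f := f) (t := {b | g b = c})
    (fun ω hω => by simpa using hω)]
  refine sum_congr rfl fun b hb => ?_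
  rw [filter_filter]
  congr 1
  ext ω
  simp only [mem_filter, mem_univ, true_and] at hb ⊢
  exact ⟨And.right, fun h => ⟨h ▸ hb, h⟩⟩

lemma uniformPushforward_comp {γ : Type} [Fintype β] [DecidableEq γ] (f : Ω → β) (g : β → γ)
    (c : γ) :
    uniformPushforward (g ∘ f) c = ∑ b, if g b = c then uniformPushforward f b else 0 := by
  simp only [uniformPushforward, Function.comp_apply, card_filter_comp_eq_sum, Nat.cast_sum,
    Nat.cast_ite, Nat.cast_zero, sum_div, ite_div, zero_div]

end UniformPushforward

section Sampler

variable {V : Type} [DecidableEq V] {H : Set (Finset V)} {P : Set (MvPolynomial V ℝ)}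

lemma hConsistent_of_sampler {Ω : Type} [Fintype Ω] [Nonempty Ω]
    (s : ∀ X ∈ H, Ω → {x // x ∈ X} → Bool)
    (hsat : ∀ X (hX : X ∈ H), ∀ q ∈ P, q.vars ⊆ X → ∀ ω, 0 ≤ eval (assignOf X (s X hX ω)) q)
    (hrestrict : ∀ X Y (hX : X ∈ H) (hY : Y ∈ H) (hXY : X ⊆ Y), ∃ τ : Ω ≃ Ω,
      ∀ ω, (fun x : {x // x ∈ X} => s Y hY ω ⟨x, hXY x.2⟩) = s X hX (τ ω)) :
    HConsistent V H P := by
  classical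
  refine ⟨fun X => if hX : X ∈ H then uniformPushforward (s X hX) else 0, ?_, ?_, ?_⟩
  · intro X hX
    simp only [dif_pos hX]
    exact ⟨uniformPushforward_nonneg _, sum_uniformPushforward _⟩
  · intro X hX q hq hqX μ hμ
    simp only [dif_pos hX] at hμ
    obtain ⟨ω, rfl⟩ := exists_eq_of_uniformPushforward_pos hμ
    exact hsat X hX q hq hqX ω
  · intro X Y hX hY hXY μ
    obtain ⟨τ, hτ⟩ := hrestrict X Y hX hY hXY
    have hcomp : s X hX ∘ τ = (fun η x => η ⟨x.1, hXY x.2⟩) ∘ s Y hY := funext fun ω => (hτ ω).symm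
    simp only [dif_pos hX, dif_pos hY]
    rw [← uniformPushforward_comp_equiv _ τ, hcomp, uniformPushforward_comp]

end Sampler

section ClauseEncoding

variable {V : Type} [DecidableEq V]

lemma coeff_single_encodeIneqSA {C : Clause V} (hC : Set.InjOn Prod.fst (C : Set (V × Bool)))
    {l : V × Bool} (hl : l ∈ C) :
    coeff (Finsupp.single l.1 1) (encodeIneqSA C) = if l.2 then 1 else -1 := by
  have h0 : (0 : V →₀ ℕ) ≠ Finsupp.single l.1 1 := (Finsupp.single_ne_zero.mpr one_ne_zero).symm
  have hsingle : ∀ l' : V × Bool,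
      coeff (Finsupp.single l.1 1) (if l'.2 then X l'.1 else 1 - X l'.1 : MvPolynomial V ℝ)
        = if l'.1 = l.1 then (if l'.2 then 1 else -1) else 0 := by
    intro l'
    by_cases h : l'.1 = l.1 <;> cases l'.2 <;>
      simp [h, h0, coeff_X, coeff_one, Finsupp.single_eq_single_iff]
  rw [encodeIneqSA, coeff_sub, coeff_sum, coeff_one, if_neg h0]
  simp only [hsingle, sub_zero]
  rw [sum_eq_single l (fun l' hl' hne => if_neg fun h => hne (hC hl' hl h)) (absurd hl), if_pos rfl]

lemma mem_vars_encodeIneqSA {C : Clause V} (hC : Set.InjOn Prod.fst (C : Set (V × Bool)))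
    {l : V × Bool} (hl : l ∈ C) : l.1 ∈ (encodeIneqSA C).vars := by
  rw [mem_vars_iff_mem_support]
  refine ⟨Finsupp.single l.1 1, ?_, by simp⟩
  rw [mem_support_iff, coeff_single_encodeIneqSA hC hl]
  split <;> norm_num

lemma eval_assignOf_encodeIneqSA_nonneg {X : Finset V} {μ : {x // x ∈ X} → Bool}
    {C : Clause V} {l : V × Bool} (hl : l ∈ C) (hlX : l.1 ∈ X) (hμ : μ ⟨l.1, hlX⟩ = l.2) :
    0 ≤ eval (assignOf X μ) (encodeIneqSA C) := by
  set a := assignOf X μ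
  have ha : ∀ v, 0 ≤ a v ∧ a v ≤ 1 := by
    intro v
    unfold a assignOf
    split_ifs <;> norm_num
  let lit : V × Bool → ℝ := fun l' => if l'.2 then a l'.1 else 1 - a l'.1
  have hlit_nonneg : ∀ l' ∈ C, 0 ≤ lit l' := by
    intro l' _
    unfold lit
    split <;> linarith [ha l'.1]
  have hlit : lit l = 1 := by
    have : a l.1 = if μ ⟨l.1, hlX⟩ then 1 else 0 := dif_pos hlX
    unfold lit
    cases h : l.2 <;> simp_all
  have heval : eval a (encodeIneqSA C) = ∑ l' ∈ C, lit l' - 1 := by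
    simp only [encodeIneqSA, map_sub, map_sum, map_one, lit]
    congr 1
    refine sum_congr rfl fun l' _ => ?_
    split <;> simp
  linarith [single_le_sum hlit_nonneg hl]

end ClauseEncoding

/-- The assignment in which pigeon `v` sits in hole `hole v + 1` (holes are 1-based):
`q v w` says that `v` sits in hole `w`, and `z v w` that it sits in a hole after `w`. -/
def pigeonAssignment {m : ℕ} (hole : ℕ → Fin m) : TVar → Bool
  | .q v w => decide ((hole v : ℕ) + 1 = w)
  | .z v w => decide (w < (hole v : ℕ) + 1)

lemma pigeonAssignment_congr {m : ℕ} {hole hole' : ℕ → Fin m} {x : TVar}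
    (h : hole x.pigeon = hole' x.pigeon) : pigeonAssignment hole x = pigeonAssignment hole' x := by
  cases x <;> simp only [pigeonAssignment, TVar.pigeon] at h ⊢ <;> rw [h]

lemma TPHP.injOn_fst {k : ℕ} {C : Clause TVar} (hC : C ∈ TPHP k) :
    Set.InjOn Prod.fst (C : Set (TVar × Bool)) := by
  rcases hC with ⟨v, -, -, rfl⟩ | ⟨v, w, -, -, -, -, rfl⟩ | ⟨v, -, -, rfl⟩ |
    ⟨v, v', w, -, -, -, -, hvv', -, -, rfl⟩ <;>
  · simp only [coe_insert, coe_singleton, Set.InjOn, Set.mem_insert_iff, Set.mem_singleton_iff]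
    rintro _ (rfl | rfl | rfl) _ (rfl | rfl | rfl) h <;> simp_all

lemma TPHP.exists_satisfied_literal {k : ℕ} {C : Clause TVar} (hC : C ∈ TPHP k)
    {hole : ℕ → Fin (k - 1)} {S : Set ℕ} (hCS : ∀ l ∈ C, l.1.pigeon ∈ S)
    (hinj : Set.InjOn hole S) : ∃ l ∈ C, pigeonAssignment hole l.1 = l.2 := by
  rcases hC with ⟨v, -, -, rfl⟩ | ⟨v, w, -, -, -, -, rfl⟩ | ⟨v, -, -, rfl⟩ |
    ⟨v, v', w, -, -, -, -, hvv', -, -, rfl⟩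
  · simp [pigeonAssignment]; omega
  · simp [pigeonAssignment]; omega
  · simp [pigeonAssignment]; omega
  · have hne : (hole v : ℕ) ≠ hole v' := fun h => hvv' <|
      hinj (hCS (TVar.q v w, false) (by simp)) (hCS (TVar.q v' w, false) (by simp)) (Fin.ext h)
    simp [pigeonAssignment]
    omega

lemma exists_injOn_fin {α : Type} {m : ℕ} [NeZero m] {s : Finset α} (hs : #s ≤ m) :
    ∃ f : α → Fin m, Set.InjOn f s := by
  obtain ⟨e⟩ := Function.Embedding.nonempty_of_card_le (α := s) (β := Fin m) (by simpa using hs)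
  exact Set.exists_injOn_iff_injective.mpr ⟨e, e.injective⟩

lemma exists_perm_apply_eq_of_injOn {α β : Type} {s : Set α} [Finite s] {f g : α → β}
    (hf : Set.InjOn f s) (hg : Set.InjOn g s) : ∃ π : Equiv.Perm β, ∀ a ∈ s, π (f a) = g a := by
  obtain ⟨π, hπ⟩ := Equiv.Perm.exists_extending_pair (s.domRestrict f) (s.domRestrict g)
    hf.injective hg.injective
  exact ⟨π, fun a ha => hπ ⟨a, ha⟩⟩

/-- for every `k ≥ 4`, with `H` the downward-closed family of
all sets of variables of `TPHP` mentioning at most `k−1` pigeons, the set `P`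
of polynomial inequalities encoding the clauses of `TPHP` admits an
`H`-consistent family of distributions. -/
theorem tphp_admits_consistent_family (k : ℕ) (hk : 4 ≤ k) :
    HConsistent TVar
      {X : Finset TVar | (∀ x ∈ X, TVar.valid k x) ∧ (X.image TVar.pigeon).card ≤ k - 1}
      ((fun C => encodeIneqSA C) '' TPHP k) := by
  have : NeZero (k - 1) := ⟨by omega⟩
  choose hole hole_injOn using fun (X : Finset TVar)
    (hX : (∀ x ∈ X, TVar.valid k x) ∧ (X.image TVar.pigeon).card ≤ k - 1) => exists_injOn_fin hX.2
  refine hConsistent_of_sampler (Ω := Equiv.Perm (Fin (k - 1)))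
    (fun X hX σ x => pigeonAssignment (σ ∘ hole X hX) x) ?_ ?_
  · rintro X hX _ ⟨C, hC, rfl⟩ hCX σ
    have hmem : ∀ l ∈ C, l.1 ∈ X := fun l hl => hCX (mem_vars_encodeIneqSA (TPHP.injOn_fst hC) hl)
    obtain ⟨l, hl, hsat⟩ := TPHP.exists_satisfied_literal hC
      (fun l hl => mem_image_of_mem TVar.pigeon (hmem l hl))
      (σ.injective.comp_injOn (hole_injOn X hX))
    exact eval_assignOf_encodeIneqSA_nonneg hl (hmem l hl) hsat
  · intro X Y hX hY hXY
    obtain ⟨π, hπ⟩ := exists_perm_apply_eq_of_injOn (hole_injOn X hX)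
      ((hole_injOn Y hY).mono (coe_subset.mpr (image_subset_image hXY)))
    refine ⟨Equiv.mulRight π, fun σ => funext fun x => pigeonAssignment_congr ?_⟩
    simp [hπ _ (mem_image_of_mem TVar.pigeon x.2)]

end NarrowProofs
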